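/- Let g satisfy the Carathéodory condition and |g(x,t)| ≤ η(x)|t|^{q−1} with η ∈ L^{p/(p−q)}(ℝ^N), 1 < q < p. Let (w_n), (v_n) ⊂ W^{1,p}(ℝ^N) with ‖w_n‖_W ≤ M₁, w_n → w a.e., ‖v_n‖_W ≤ M₂, v_n → 0 a.e. Then ∫_{ℝ^N} g(x,w_n) v_n dx → 0 as n → ∞. -/

import Mathlib

open MeasureTheory Filter

lemma young_eps {s s' : ℝ} (h : s.HolderConjugate s') {ε : ℝ} (hε : 0 < ε) :
    ∃ C : ℝ, 0 ≤ C ∧ ∀ a b : ℝ, 0 ≤ a → 0 ≤ b → a * b ≤ ε * a ^ s + C * b ^ s' := by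
  have hs : 0 < s := h.pos
  have hs' : 0 < s' := h.symm.pos
  set δ : ℝ := (ε * s) ^ s⁻¹ with hδdef
  have hδ : 0 < δ := Real.rpow_pos_of_pos (by positivity) _
  refine ⟨(1 / δ) ^ s' / s', by positivity, fun a b ha hb => ?_⟩
  have key := Real.young_inequality_of_nonneg (mul_nonneg hδ.le ha)
    (mul_nonneg (by positivity : (0:ℝ) ≤ 1 / δ) hb) h
  have h1 : (δ * a) * ((1 / δ) * b) = a * b := by
    field_simp
  have h2 : (δ * a) ^ s / s = ε * a ^ s := by
    rw [Real.mul_rpow hδ.le ha, hδdef, Real.rpow_inv_rpow (by positivity) hs.ne']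
    field_simp
  have h3 : ((1 / δ) * b) ^ s' / s' = (1 / δ) ^ s' / s' * b ^ s' := by
    rw [Real.mul_rpow (by positivity) hb]
    ring
  rw [h1, h2, h3] at key
  exact key

lemma sobolev_part_le {A C M p : ℝ} (hA : 0 ≤ A) (hC : 0 ≤ C) (hp : 0 < p)
    (h : (A + C) ^ (1 / p) ≤ M) : C ≤ M ^ p := by
  have h2 : ((A + C) ^ (1 / p)) ^ p ≤ M ^ p :=
    Real.rpow_le_rpow (Real.rpow_nonneg (by linarith) _) h hp.le
  rw [one_div, Real.rpow_inv_rpow (by linarith) hp.ne'] at h2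
  linarith

/-- If `g` is Carathéodory with `|g(x,t)| ≤ η(x)|t|^{q−1}`,
`η ∈ L^{p/(p−q)}`, `1 < q < p`, and `(w_n), (v_n) ⊂ W^{1,p}(ℝ^N)` (with weak
gradients `Dw_n, Dv_n`) satisfy `‖w_n‖_W ≤ M₁`, `w_n → w` a.e., `‖v_n‖_W ≤ M₂`,
`v_n → 0` a.e., then `∫ g(x,w_n) v_n dx → 0`. -/
theorem stmt11 (N : ℕ) (hN : 3 ≤ N) (p q : ℝ) (hq1 : 1 < q) (hqp : q < p)
    (g : EuclideanSpace ℝ (Fin N) → ℝ → ℝ)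
    (η : EuclideanSpace ℝ (Fin N) → ℝ)
    (hg_meas : ∀ t, AEStronglyMeasurable (fun x => g x t) volume)
    (hg_cont : ∀ᵐ x ∂(volume : Measure (EuclideanSpace ℝ (Fin N))),
      Continuous (fun t => g x t))
    (hη : MemLp η (ENNReal.ofReal (p / (p - q))) volume)
    (hgrowth : ∀ᵐ x ∂(volume : Measure (EuclideanSpace ℝ (Fin N))),
      ∀ t : ℝ, |g x t| ≤ η x * |t| ^ (q - 1))
    (w : ℕ → EuclideanSpace ℝ (Fin N) → ℝ)
    (Dw : ℕ → EuclideanSpace ℝ (Fin N) → EuclideanSpace ℝ (Fin N))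
    (v : ℕ → EuclideanSpace ℝ (Fin N) → ℝ)
    (Dv : ℕ → EuclideanSpace ℝ (Fin N) → EuclideanSpace ℝ (Fin N))
    (wlim : EuclideanSpace ℝ (Fin N) → ℝ)
    (M₁ M₂ : ℝ) (hM₁ : 0 < M₁) (hM₂ : 0 < M₂)
    (hw_p : ∀ n, MemLp (w n) (ENNReal.ofReal p) volume)
    (hDw_p : ∀ n, MemLp (Dw n) (ENNReal.ofReal p) volume)
    (hv_p : ∀ n, MemLp (v n) (ENNReal.ofReal p) volume)
    (hDv_p : ∀ n, MemLp (Dv n) (ENNReal.ofReal p) volume)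
    (hwB : ∀ n, ((∫ x, ‖Dw n x‖ ^ p) + ∫ x, |w n x| ^ p) ^ (1 / p) ≤ M₁)
    (hvB : ∀ n, ((∫ x, ‖Dv n x‖ ^ p) + ∫ x, |v n x| ^ p) ^ (1 / p) ≤ M₂)
    (hw_ae : ∀ᵐ x ∂(volume : Measure (EuclideanSpace ℝ (Fin N))),
      Tendsto (fun n => w n x) atTop (nhds (wlim x)))
    (hv_ae : ∀ᵐ x ∂(volume : Measure (EuclideanSpace ℝ (Fin N))),
      Tendsto (fun n => v n x) atTop (nhds 0)) :
    Tendsto (fun n => ∫ x, g x (w n x) * v n x) atTop (nhds 0) := by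
  have hp0 : 0 < p := lt_trans (lt_trans one_pos hq1) hqp
  have hq0 : 0 < q := lt_trans one_pos hq1
  have hq1' : 0 < q - 1 := by linarith
  have hpq0 : 0 < p - q := by linarith
  set s : ℝ := p / q with hsdef
  set s' : ℝ := p / (p - q) with hs'def
  have hs0 : 0 < s := by positivity
  have hs'0 : 0 < s' := by positivity
  have hconj : s.HolderConjugate s' := by
    rw [Real.holderConjugate_iff]
    constructor
    · rw [hsdef, lt_div_iff₀ hq0]; linarith
    · rw [hsdef, hs'def, inv_div, inv_div, ← add_div,
        show q + (p - q) = p by ring]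
      exact div_self hp0.ne'
  have hconj2 : (q / (q - 1)).HolderConjugate q := by
    rw [Real.holderConjugate_iff]
    constructor
    · rw [lt_div_iff₀ hq1']; linarith
    · rw [inv_div, inv_eq_one_div, ← add_div, show q - 1 + 1 = q by ring]
      exact div_self hq0.ne'
  -- the dominating sequence
  set F : ℕ → EuclideanSpace ℝ (Fin N) → ℝ :=
    fun n x => |η x| * (|w n x| ^ (q - 1) * |v n x|) with hFdef
  have hFnn : ∀ n x, 0 ≤ F n x := fun n x =>
    mul_nonneg (abs_nonneg _)
      (mul_nonneg (Real.rpow_nonneg (abs_nonneg _) _) (abs_nonneg _))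
  -- measurability
  have hηm : AEMeasurable η (μ := volume) := hη.aestronglyMeasurable.aemeasurable
  have hwm : ∀ n, AEMeasurable (w n) (μ := volume) :=
    fun n => (hw_p n).aestronglyMeasurable.aemeasurable
  have hvm : ∀ n, AEMeasurable (v n) (μ := volume) :=
    fun n => (hv_p n).aestronglyMeasurable.aemeasurable
  have habs : ∀ (f : EuclideanSpace ℝ (Fin N) → ℝ), AEMeasurable f (μ := volume) →
      AEMeasurable (fun x => |f x|) (μ := volume) :=
    fun f hf => measurable_abs.comp_aemeasurable hf
  have ham : ∀ n, AEMeasurable (fun x => |w n x| ^ (q - 1) * |v n x|) (μ := volume) :=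
    fun n => ((habs _ (hwm n)).pow aemeasurable_const).mul (habs _ (hvm n))
  have hFm : ∀ n, AEMeasurable (F n) (μ := volume) :=
    fun n => (habs _ hηm).mul (ham n)
  -- integrability of the p-th powers
  have hofReal_ne : ENNReal.ofReal p ≠ 0 := by
    simpa [ENNReal.ofReal_eq_zero, not_le] using hp0
  have hwint : ∀ n, Integrable (fun x => |w n x| ^ p) (volume) := by
    intro n
    have := (hw_p n).integrable_norm_rpow hofReal_ne ENNReal.ofReal_ne_top
    simpa [ENNReal.toReal_ofReal hp0.le, Real.norm_eq_abs] using this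
  have hvint : ∀ n, Integrable (fun x => |v n x| ^ p) (volume) := by
    intro n
    have := (hv_p n).integrable_norm_rpow hofReal_ne ENNReal.ofReal_ne_top
    simpa [ENNReal.toReal_ofReal hp0.le, Real.norm_eq_abs] using this
  have hηsint : Integrable (fun x => |η x| ^ s') (volume) := by
    have h0 : ENNReal.ofReal s' ≠ 0 := by
      simpa [ENNReal.ofReal_eq_zero, not_le] using hs'0
    have := hη.integrable_norm_rpow h0 ENNReal.ofReal_ne_top
    simpa [ENNReal.toReal_ofReal hs'0.le, Real.norm_eq_abs] using this
  -- bounds on the integrals of |w n|^p and |v n|^p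
  have hIw : ∀ n, ∫ x, |w n x| ^ p ≤ M₁ ^ p := fun n =>
    sobolev_part_le (integral_nonneg fun x => by positivity)
      (integral_nonneg fun x => by positivity) hp0 (hwB n)
  have hIv : ∀ n, ∫ x, |v n x| ^ p ≤ M₂ ^ p := fun n =>
    sobolev_part_le (integral_nonneg fun x => by positivity)
      (integral_nonneg fun x => by positivity) hp0 (hvB n)
  -- pointwise Young bound on a^s
  have hGle : ∀ n x, (|w n x| ^ (q - 1) * |v n x|) ^ s ≤ |w n x| ^ p + |v n x| ^ p := by
    intro n x
    have h1 : (|w n x| ^ (q - 1) * |v n x|) ^ s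
        = |w n x| ^ ((q - 1) * s) * |v n x| ^ s := by
      rw [Real.mul_rpow (Real.rpow_nonneg (abs_nonneg _) _) (abs_nonneg _),
        ← Real.rpow_mul (abs_nonneg _)]
    have key := Real.young_inequality_of_nonneg
      (Real.rpow_nonneg (abs_nonneg (w n x)) ((q - 1) * s))
      (Real.rpow_nonneg (abs_nonneg (v n x)) s) hconj2
    have e1 : (|w n x| ^ ((q - 1) * s)) ^ (q / (q - 1)) = |w n x| ^ p := by
      rw [← Real.rpow_mul (abs_nonneg _)]
      congr 1
      rw [hsdef]
      field_simp
    have e2 : (|v n x| ^ s) ^ q = |v n x| ^ p := by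
      rw [← Real.rpow_mul (abs_nonneg _)]
      congr 1
      rw [hsdef]
      field_simp
    rw [e1, e2] at key
    have hu1 : (1:ℝ) ≤ q / (q - 1) := hconj2.lt.le
    have d1 : |w n x| ^ p / (q / (q - 1)) ≤ |w n x| ^ p :=
      div_le_self (Real.rpow_nonneg (abs_nonneg _) _) hu1
    have d2 : |v n x| ^ p / q ≤ |v n x| ^ p :=
      div_le_self (Real.rpow_nonneg (abs_nonneg _) _) hq1.le
    rw [h1]
    linarith
  -- integrability of a^s
  have hasint : ∀ n, Integrable (fun x => (|w n x| ^ (q - 1) * |v n x|) ^ s) (volume) := by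
    intro n
    refine Integrable.mono' ((hwint n).add (hvint n))
      (((ham n).pow aemeasurable_const).aestronglyMeasurable)
      (Eventually.of_forall fun x => ?_)
    rw [Real.norm_eq_abs, abs_of_nonneg (Real.rpow_nonneg
      (mul_nonneg (Real.rpow_nonneg (abs_nonneg _) _) (abs_nonneg _)) _)]
    exact hGle n x
  have hIGa : ∀ n, ∫ x, (|w n x| ^ (q - 1) * |v n x|) ^ s ≤ M₁ ^ p + M₂ ^ p := by
    intro n
    calc ∫ x, (|w n x| ^ (q - 1) * |v n x|) ^ s
        ≤ ∫ x, (|w n x| ^ p + |v n x| ^ p) :=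
          integral_mono_of_nonneg
            (Eventually.of_forall fun x => Real.rpow_nonneg
              (mul_nonneg (Real.rpow_nonneg (abs_nonneg _) _) (abs_nonneg _)) _)
            ((hwint n).add (hvint n)) (Eventually.of_forall fun x => hGle n x)
      _ = (∫ x, |w n x| ^ p) + ∫ x, |v n x| ^ p := integral_add (hwint n) (hvint n)
      _ ≤ M₁ ^ p + M₂ ^ p := add_le_add (hIw n) (hIv n)
  -- Integrability of F n (via Young with ε = 1)
  have hFint : ∀ n, Integrable (F n) (volume) := by
    intro n
    obtain ⟨C₁, hC₁, hY₁⟩ := young_eps hconj one_pos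
    refine Integrable.mono' (((hasint n).const_mul 1).add (hηsint.const_mul C₁))
      (hFm n).aestronglyMeasurable (Eventually.of_forall fun x => ?_)
    rw [Real.norm_eq_abs, abs_of_nonneg (hFnn n x)]
    have := hY₁ (|w n x| ^ (q - 1) * |v n x|) (|η x|)
      (mul_nonneg (Real.rpow_nonneg (abs_nonneg _) _) (abs_nonneg _)) (abs_nonneg _)
    calc F n x = (|w n x| ^ (q - 1) * |v n x|) * |η x| := mul_comm _ _
      _ ≤ 1 * (|w n x| ^ (q - 1) * |v n x|) ^ s + C₁ * |η x| ^ s' := this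
  -- F n → 0 a.e.
  have hF0 : ∀ᵐ x ∂(volume : Measure (EuclideanSpace ℝ (Fin N))),
      Tendsto (fun n => F n x) atTop (nhds 0) := by
    filter_upwards [hw_ae, hv_ae] with x hwx hvx
    have h1 : Tendsto (fun n => |w n x| ^ (q - 1)) atTop (nhds (|wlim x| ^ (q - 1))) :=
      (hwx.abs).rpow_const (Or.inr hq1'.le)
    have h2 : Tendsto (fun n => |v n x|) atTop (nhds |(0:ℝ)|) := hvx.abs
    have := (tendsto_const_nhds (x := |η x|) (f := atTop)).mul (h1.mul h2)
    simpa using this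
  -- reduce to ∫ F n → 0
  suffices hI : Tendsto (fun n => ∫ x, F n x) atTop (nhds 0) by
    refine squeeze_zero_norm (fun n => ?_) hI
    calc ‖∫ x, g x (w n x) * v n x‖ ≤ ∫ x, ‖g x (w n x) * v n x‖ :=
          norm_integral_le_integral_norm _
      _ ≤ ∫ x, F n x := by
          refine integral_mono_of_nonneg
            (Eventually.of_forall fun x => norm_nonneg _) (hFint n) ?_
          filter_upwards [hgrowth] with x hx
          have hb1 : |g x (w n x)| ≤ η x * |w n x| ^ (q - 1) := hx _
          have hb2 : η x * |w n x| ^ (q - 1) ≤ |η x| * |w n x| ^ (q - 1) :=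
            mul_le_mul_of_nonneg_right (le_abs_self _)
              (Real.rpow_nonneg (abs_nonneg _) _)
          calc ‖g x (w n x) * v n x‖ = |g x (w n x)| * |v n x| := by
                rw [Real.norm_eq_abs, abs_mul]
            _ ≤ (|η x| * |w n x| ^ (q - 1)) * |v n x| :=
                mul_le_mul_of_nonneg_right (hb1.trans hb2) (abs_nonneg _)
            _ = F n x := by rw [hFdef]; ring
  -- main ε argument
  rw [Metric.tendsto_atTop]
  intro ε' hε'
  set B : ℝ := M₁ ^ p + M₂ ^ p with hBdef
  have hB0 : 0 ≤ B := by positivity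
  have hεpos : 0 < ε' / (2 * (B + 1)) := by positivity
  obtain ⟨C, hC0, hY⟩ := young_eps hconj hεpos
  set H : EuclideanSpace ℝ (Fin N) → ℝ := fun x => C * |η x| ^ s' with hHdef
  have hHint : Integrable H (volume) := hηsint.const_mul C
  have hH0 : ∀ x, 0 ≤ H x := fun x =>
    mul_nonneg hC0 (Real.rpow_nonneg (abs_nonneg _) _)
  have hHm : AEMeasurable H (μ := volume) :=
    ((habs _ hηm).pow aemeasurable_const).const_mul C
  have hminint : ∀ n, Integrable (fun x => min (F n x) (H x)) (volume) := by
    intro n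
    refine Integrable.mono' hHint ((hFm n).min hHm).aestronglyMeasurable
      (Eventually.of_forall fun x => ?_)
    rw [Real.norm_eq_abs, abs_of_nonneg (le_min (hFnn n x) (hH0 x))]
    exact min_le_right _ _
  have hmin_tendsto :
      Tendsto (fun n => ∫ x, min (F n x) (H x)) atTop (nhds 0) := by
    have := tendsto_integral_of_dominated_convergence (μ := volume)
      (F := fun n x => min (F n x) (H x)) (f := fun _ => (0:ℝ)) H
      (fun n => ((hFm n).min hHm).aestronglyMeasurable) hHint
      (fun n => Eventually.of_forall fun x => by
        rw [Real.norm_eq_abs, abs_of_nonneg (le_min (hFnn n x) (hH0 x))]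
        exact min_le_right _ _)
      (by
        filter_upwards [hF0] with x hx
        have := hx.min (tendsto_const_nhds (x := H x) (f := atTop))
        rwa [min_eq_left (hH0 x)] at this)
    simpa using this
  obtain ⟨n₀, hn₀⟩ := (Metric.tendsto_atTop.mp hmin_tendsto) (ε' / 2) (by positivity)
  refine ⟨n₀, fun n hn => ?_⟩
  have hptwise : ∀ x, F n x ≤
      (ε' / (2 * (B + 1))) * (|w n x| ^ (q - 1) * |v n x|) ^ s + min (F n x) (H x) := by
    intro x
    rcases le_total (F n x) (H x) with h | h
    · rw [min_eq_left h]
      have h00 : 0 ≤ (|w n x| ^ (q - 1) * |v n x|) ^ s :=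
        Real.rpow_nonneg (mul_nonneg (Real.rpow_nonneg (abs_nonneg _) _) (abs_nonneg _)) s
      have h0 : 0 ≤ (ε' / (2 * (B + 1))) * (|w n x| ^ (q - 1) * |v n x|) ^ s :=
        mul_nonneg hεpos.le h00
      linarith
    · rw [min_eq_right h]
      have := hY (|w n x| ^ (q - 1) * |v n x|) (|η x|)
        (mul_nonneg (Real.rpow_nonneg (abs_nonneg _) _) (abs_nonneg _)) (abs_nonneg _)
      calc F n x = (|w n x| ^ (q - 1) * |v n x|) * |η x| := mul_comm _ _
        _ ≤ (ε' / (2 * (B + 1))) * (|w n x| ^ (q - 1) * |v n x|) ^ s + C * |η x| ^ s' :=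
            this
        _ = (ε' / (2 * (B + 1))) * (|w n x| ^ (q - 1) * |v n x|) ^ s + H x := by
            rw [hHdef]
  have hbound : ∫ x, F n x ≤
      (ε' / (2 * (B + 1))) * B + ∫ x, min (F n x) (H x) := by
    calc ∫ x, F n x
        ≤ ∫ x, ((ε' / (2 * (B + 1))) * (|w n x| ^ (q - 1) * |v n x|) ^ s
            + min (F n x) (H x)) :=
          integral_mono_of_nonneg (Eventually.of_forall (hFnn n))
            (((hasint n).const_mul _).add (hminint n))
            (Eventually.of_forall hptwise)
      _ = (ε' / (2 * (B + 1))) * (∫ x, (|w n x| ^ (q - 1) * |v n x|) ^ s)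
            + ∫ x, min (F n x) (H x) := by
          rw [integral_add ((hasint n).const_mul _) (hminint n),
            MeasureTheory.integral_const_mul]
      _ ≤ (ε' / (2 * (B + 1))) * B + ∫ x, min (F n x) (H x) := by
          have := mul_le_mul_of_nonneg_left (hIGa n) hεpos.le
          rw [hBdef]
          linarith
  have hmin_small : ∫ x, min (F n x) (H x) < ε' / 2 := by
    have := hn₀ n hn
    rw [dist_zero_right, Real.norm_eq_abs] at this
    exact lt_of_le_of_lt (le_abs_self _) this
  have hεB : (ε' / (2 * (B + 1))) * B ≤ ε' / 2 := by
    rw [div_mul_eq_mul_div, div_le_div_iff₀ (by positivity) two_pos]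
    nlinarith
  have hFnn' : 0 ≤ ∫ x, F n x := integral_nonneg (hFnn n)
  rw [dist_zero_right, Real.norm_eq_abs, abs_of_nonneg hFnn']
  linarith
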